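/- Let S be a finite quasigroup (a set with a Latin-square binary operation ∘). If the quadrangle criterion holds, i.e., for all i,j,k,l,i',j',k',l' ∈ S, i∘k = i'∘k', i∘l = i'∘l', and j∘k = j'∘k' together imply j∘l = j'∘l', then (S, ∘) is isotopic to a group: there exists a group structure * on S and bijections α, β, γ : S → S with γ(x ∘ y) = α(x) * β(y) for all x, y. -/
import Mathlib


theorem quadrangle_implies_isotopic_to_group
    (S : Type*) [Fintype S] [Nonempty S] (op : S → S → S)
    (hrow : ∀ a : S, Function.Bijective (fun x => op a x))
    (hcol : ∀ a : S, Function.Bijective (fun x => op x a))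
    (hquad : ∀ i j k l i' j' k' l' : S,
      op i k = op i' k' → op i l = op i' l' → op j k = op j' k' →
      op j l = op j' l') :
    ∃ (g : Group S) (α β γ : S ≃ S),
      ∀ x y : S, γ (op x y) = g.mul (α x) (β y) := by
  classical
  obtain ⟨e⟩ := ‹Nonempty S›
  set R : S ≃ S := Equiv.ofBijective (fun x => op x e) (hcol e) with hR
  set L : S ≃ S := Equiv.ofBijective (fun x => op e x) (hrow e) with hL
  set mul : S → S → S := fun a b => op (R.symm a) (L.symm b) with hmul
  set one : S := op e e with hone
  have hRapp : ∀ x, R x = op x e := fun _ => rfl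
  have hLapp : ∀ x, L x = op e x := fun _ => rfl
  have hRsymm : ∀ a, op (R.symm a) e = a := fun a => R.apply_symm_apply a
  have hLsymm : ∀ a, op e (L.symm a) = a := fun a => L.apply_symm_apply a
  have hRe : R.symm one = e := by
    have : R e = one := rfl
    rw [← this, Equiv.symm_apply_apply]
  have hLe : L.symm one = e := by
    have : L e = one := rfl
    rw [← this, Equiv.symm_apply_apply]
  have one_mul' : ∀ a, mul one a = a := by
    intro a; simp only [hmul, hRe, hLsymm]
  have mul_one' : ∀ a, mul a one = a := by
    intro a; simp only [hmul, hLe, hRsymm]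
  have assoc : ∀ a b c, mul (mul a b) c = mul a (mul b c) := by
    intro a b c
    -- notation
    set x := R.symm a
    set u := L.symm b
    set v := R.symm b
    set z := L.symm c
    have hb : op v e = op e u := by
      rw [hRsymm, hLsymm]
    show op (R.symm (op x u)) z = op x (L.symm (op v z))
    set p := R.symm (op x u)
    set q := L.symm (op v z)
    have hp : op p e = op x u := hRsymm _
    have hq : op e q = op v z := hLsymm _
    exact hquad v p e z e x u q hb hq.symm hp
  -- left multiplication by a is bijective
  have hlb : ∀ a, Function.Bijective (fun b => mul a b) := by
    intro a
    have : (fun b => mul a b) = (fun y => op (R.symm a) y) ∘ L.symm := rfl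
    rw [this]
    exact (hrow (R.symm a)).comp L.symm.bijective
  set inv : S → S := fun a => (Equiv.ofBijective _ (hlb a)).symm one with hinv
  have hmulinv : ∀ a, mul a (inv a) = one := fun a =>
    (Equiv.ofBijective _ (hlb a)).apply_symm_apply one
  have hinvmul : ∀ a, mul (inv a) a = one := by
    intro a
    have h1 : mul a (mul (inv a) a) = mul a one := by
      rw [← assoc, hmulinv, one_mul', mul_one']
    exact (hlb a).injective h1
  refine ⟨{ mul := mul, one := one, inv := inv,
            mul_assoc := assoc, one_mul := one_mul', mul_one := mul_one',
            inv_mul_cancel := hinvmul }, R, L, Equiv.refl S, ?_⟩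
  intro x y
  show op x y = mul (R x) (L y)
  simp only [hmul, Equiv.symm_apply_apply]
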